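/- Let (A, m_A) be a complete Noetherian local ring and φ : A → A a local ring endomorphism. Then φ is finite (i.e., A is a finitely generated module over φ(A)) if and only if the ideal of A generated by φ(m_A) is m_A-primary and the residue field extension A/m_A over φ(A)/φ(m_A) is finite. -/

import Mathlib

/-!
If `φ` is finite it is integral, so a prime containing `φ(m_A)` contracts to the maximal ideal
`m_A` and is itself maximal, i.e. equals `m_A`; and `A/m_A` is finite over `A` via `φ`, hence over
`A/m_A`. Conversely, `φ(m_A)A` contains a power of `m_A`, so `A/φ(m_A)A → A/m_A` has a finitely
generated nilpotent kernel, which makes `A/φ(m_A)A` finite over `A` via `φ`. As `φ(m_A)A ⊆ m_A`,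
the `φ`-module `A` is `m_A`-adically Hausdorff, and completeness of the source lets lifts of
generators of `A/φ(m_A)A` generate `A` (complete Nakayama).
-/

open IsLocalRing

section AdicNakayama

variable {R : Type*} [CommRing R] (I : Ideal R)

theorem Submodule.smul_top_pi {ι : Type*} [Finite ι] (M : ι → Type*) [∀ i, AddCommGroup (M i)]
    [∀ i, Module R (M i)] :
    I • (⊤ : Submodule R (∀ i, M i)) = Submodule.pi Set.univ fun _ ↦ I • ⊤ := by
  classical
  have := Fintype.ofFinite ι
  refine le_antisymm (Submodule.smul_le.mpr fun r hr x _ i _ ↦ smul_mem_smul hr trivial)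
    fun x hx ↦ ?_
  rw [← Finset.univ_sum_single x]
  refine Submodule.sum_mem _ fun i _ ↦ ?_
  have hi : Pi.single i (x i) ∈ (I • ⊤ : Submodule R (M i)).map (LinearMap.single R M i) :=
    Submodule.mem_map_of_mem (hx i (Set.mem_univ i))
  rw [Submodule.map_smul''] at hi
  exact Submodule.smul_mono le_rfl le_top hi

instance IsPrecomplete.pi {ι : Type*} [Finite ι] (M : ι → Type*) [∀ i, AddCommGroup (M i)]
    [∀ i, Module R (M i)] [∀ i, IsPrecomplete I (M i)] : IsPrecomplete I (∀ i, M i) where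
  prec' f hf := by
    simp only [SModEq.sub_mem, Submodule.smul_top_pi, Submodule.mem_pi, Set.mem_univ,
      forall_const, Pi.sub_apply] at hf ⊢
    choose L hL using fun i ↦ IsPrecomplete.prec (I := I) inferInstance (f := (f · i))
      fun hmn ↦ SModEq.sub_mem.mpr (hf hmn i)
    exact ⟨L, fun n i ↦ SModEq.sub_mem.mp (hL i n)⟩

variable {I} {M : Type*} [AddCommGroup M] [Module R M]

theorem Module.finite_of_finite_quotient_smul_top [IsPrecomplete I R] [IsHausdorff I M]
    [Module.Finite R (M ⧸ I • (⊤ : Submodule R M))] : Module.Finite R M := by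
  obtain ⟨n, g, hg⟩ := Module.Finite.exists_fin' R (M ⧸ I • (⊤ : Submodule R M))
  obtain ⟨h, rfl⟩ :=
    Module.projective_lifting_property (I • (⊤ : Submodule R M)).mkQ g (Submodule.mkQ_surjective _)
  exact Module.Finite.of_surjective h (surjective_of_mkQ_comp_surjective hg)

end AdicNakayama

section LocalAlgebra

variable {R S : Type*} [CommRing R] [CommRing S] [Algebra R S]

theorem Module.finite_quotient_of_maximalIdeal_pow_le [IsLocalRing S] [IsNoetherianRing S]
    [Module.Finite R (ResidueField S)] {J : Ideal S} {k : ℕ} (hJ : maximalIdeal S ^ k ≤ J) :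
    Module.Finite R (S ⧸ J) := by
  rcases eq_or_ne J ⊤ with rfl | hJ_ne
  · infer_instance
  have hJm : J ≤ maximalIdeal S := le_maximalIdeal hJ_ne
  have : Module.Finite R (S ⧸ maximalIdeal S) := ‹Module.Finite R (ResidueField S)›
  refine Module.finite_of_surjective_of_ker_le_nilradical (Ideal.Quotient.factorₐ R hJm)
    (Ideal.Quotient.factor_surjective hJm) ?_ (IsNoetherian.noetherian _)
  intro x hx
  obtain ⟨x, rfl⟩ := Ideal.Quotient.mk_surjective x
  have hxm : x ∈ maximalIdeal S := by
    simpa [Ideal.Quotient.eq_zero_iff_mem] using hx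
  refine mem_nilradical.mpr ⟨k, ?_⟩
  rw [← map_pow, Ideal.Quotient.eq_zero_iff_mem]
  exact hJ (Ideal.pow_mem_pow hxm k)

theorem Module.finite_of_finite_quotient_map_maximalIdeal [IsLocalRing R]
    [IsPrecomplete (maximalIdeal R) R] [IsLocalRing S] [IsNoetherianRing S]
    [IsLocalHom (algebraMap R S)]
    [Module.Finite R (S ⧸ (maximalIdeal R).map (algebraMap R S))] : Module.Finite R S := by
  have : IsHausdorff (maximalIdeal R) S := .of_map (map_maximalIdeal_le (algebraMap R S))
  have : Module.Finite R (S ⧸ (maximalIdeal R • ⊤ : Submodule R S)) := by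
    rw [Ideal.smul_top_eq_map]
    exact .equiv (Submodule.Quotient.restrictScalarsEquiv R _).symm
  exact Module.finite_of_finite_quotient_smul_top (I := maximalIdeal R)

end LocalAlgebra

section LocalHom

variable {R S : Type*} [CommRing R] [CommRing S] [IsLocalRing R] [IsLocalRing S]
  (f : R →+* S) [IsLocalHom f]

theorem IsLocalRing.radical_map_maximalIdeal_of_isIntegral (hf : f.IsIntegral) :
    ((maximalIdeal R).map f).radical = maximalIdeal S := by
  refine le_antisymm ((Ideal.radical_mono (map_maximalIdeal_le f)).trans_eq
    (maximalIdeal.isMaximal S).isPrime.radical) ?_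
  rw [Ideal.radical_eq_sInf]
  refine le_sInf fun p ⟨hle, hp⟩ ↦ ?_
  have hcomap : p.comap f = maximalIdeal R :=
    le_antisymm (le_maximalIdeal (Ideal.comap_ne_top f hp.ne_top))
      (Ideal.map_le_iff_le_comap.mp hle)
  have : p.IsMaximal :=
    Ideal.isMaximal_of_isIntegral_of_isMaximal_comap' f hf p (hcomap ▸ maximalIdeal.isMaximal R)
  exact (eq_maximalIdeal this).ge

theorem RingHom.Finite.residueField_map (hf : f.Finite) : (ResidueField.map f).Finite := by
  refine RingHom.Finite.of_comp_finite (f := residue R) ?_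
  rw [ResidueField.map_comp_residue]
  exact (RingHom.Finite.of_surjective _ residue_surjective).comp hf

theorem RingHom.finite_iff_radical_map_maximalIdeal_and_finite_residueField_map
    [IsPrecomplete (maximalIdeal R) R] [IsNoetherianRing S] :
    f.Finite ↔
      ((maximalIdeal R).map f).radical = maximalIdeal S ∧ (ResidueField.map f).Finite := by
  refine ⟨fun hf ↦ ⟨radical_map_maximalIdeal_of_isIntegral f hf.to_isIntegral,
    hf.residueField_map⟩, fun ⟨hrad, hres⟩ ↦ ?_⟩
  let := f.toAlgebra
  have : IsLocalHom (algebraMap R S) := ‹IsLocalHom f›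
  obtain ⟨k, hk⟩ := Ideal.exists_radical_pow_le_of_fg ((maximalIdeal R).map f)
    (IsNoetherian.noetherian _)
  rw [hrad] at hk
  have hresidue : ((residue S).comp f).Finite := ResidueField.map_comp_residue f ▸
    hres.comp (RingHom.Finite.of_surjective _ residue_surjective)
  have : Module.Finite R (ResidueField S) := hresidue
  have := Module.finite_quotient_of_maximalIdeal_pow_le (R := R) hk
  exact Module.finite_of_finite_quotient_map_maximalIdeal

end LocalHom

/-- Cohen's criterion: a local endomorphism `φ` of a complete Noetherian local ring
`(A, m_A)` is finite iff the ideal generated by `φ(m_A)` is `m_A`-primary and the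
induced residue field extension is finite. -/
theorem finite_selfmap_iff_primary_and_residue_finite
    (A : Type*) [CommRing A] [IsNoetherianRing A] [IsLocalRing A]
    [IsAdicComplete (maximalIdeal A) A]
    (φ : A →+* A) [IsLocalHom φ] :
    φ.Finite ↔
      (Ideal.map φ (maximalIdeal A)).radical = maximalIdeal A ∧
      (ResidueField.map φ).Finite :=
  φ.finite_iff_radical_map_maximalIdeal_and_finite_residueField_map
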